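/- Fix ν ≥ 0, α ∈ (0,1), and an integer x₀ ≥ 1. For every s ∈ (0,1): lim_{t↓0} [ (h_α(s))^{x₀} − (h_α(h_t(0)·s))^{x₀} ] / ( 1 − (h_{αt}(0))^{x₀} ) = α^{−1} s · h_α'(s) · (h_α(s))^{x₀−1}. In particular, the conditional transition probabilities of the entrance-law process near time 0 converge to a nontrivial probability distribution (the limit equals 1 at s = 1 since h_α'(1) = α). -/

import Mathlib

/-
Both numerator and denominator vanish at `t = 0`, since `h_0(0) = 1`, and both are
differentiable there, so the limit is the quotient of their derivatives at `0`
(a first-order l'Hôpital rule). With `c = (1 + ν/2)⁻¹ = -∂ₜ h_t(0)|_{t=0}`, the chain rule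
gives `x₀ h_α(s)^{x₀-1} h_α'(s) c s` for the numerator and `x₀ c α` for the denominator.
-/

open Filter Finset

/-- The linear fractional generating function `h_a(s)` (with parameter ν). -/
noncomputable def h (ν a s : ℝ) : ℝ :=
  if s = 1 then 1 else 1 - a * (1/(1-s) + ν/2 * (1-a))⁻¹

open Topology

theorem tendsto_div_of_hasDerivAt_of_eq_zero {f g : ℝ → ℝ} {f' g' a : ℝ}
    (hf : HasDerivAt f f' a) (hg : HasDerivAt g g' a) (hfa : f a = 0) (hga : g a = 0)
    (hg' : g' ≠ 0) : Tendsto (fun t => f t / g t) (𝓝[≠] a) (𝓝 (f' / g')) := by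
  refine ((hasDerivAt_iff_tendsto_slope.mp hf).div
    (hasDerivAt_iff_tendsto_slope.mp hg) hg').congr' ?_
  filter_upwards [self_mem_nhdsWithin] with t ht
  simp only [Pi.div_apply, slope_def_field, hfa, hga, sub_zero]
  exact div_div_div_cancel_right₀ (sub_ne_zero.mpr ht) _ _

theorem h_apply_zero (ν a : ℝ) : h ν a 0 = 1 - a * (1 + ν / 2 * (1 - a))⁻¹ := by
  simp [h]

theorem h_zero_zero (ν : ℝ) : h ν 0 0 = 1 := by
  simp [h_apply_zero]

theorem hasDerivAt_h_param_zero {ν : ℝ} (hν : 1 + ν / 2 ≠ 0) :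
    HasDerivAt (fun a => h ν a 0) (-(1 + ν / 2)⁻¹) 0 := by
  have hden : HasDerivAt (fun a : ℝ => 1 + ν / 2 * (1 - a)) (-(ν / 2)) 0 := by
    simpa using (((hasDerivAt_id (0 : ℝ)).const_sub 1).const_mul (ν / 2)).const_add 1
  have := ((hasDerivAt_id' (0 : ℝ)).mul (hden.inv (by simpa using hν))).const_sub 1
  simp only [h_apply_zero]
  exact this.congr_deriv (by simp)

theorem h_eventuallyEq {ν a s : ℝ} (hs : s ≠ 1) :
    h ν a =ᶠ[𝓝 s] fun u => 1 - a * (1 / (1 - u) + ν / 2 * (1 - a))⁻¹ := by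
  filter_upwards [compl_singleton_mem_nhds hs] with u hu
  simp [h, show u ≠ 1 from hu]

theorem differentiableAt_h {ν a s : ℝ} (hν : 0 ≤ ν) (ha : a ≤ 1) (hs : s < 1) :
    DifferentiableAt ℝ (h ν a) s := by
  have hs' : 1 - s ≠ 0 := by linarith
  have hw : 1 / (1 - s) + ν / 2 * (1 - a) ≠ 0 := by
    have : 0 < 1 / (1 - s) := one_div_pos.mpr (by linarith)
    have : 0 ≤ ν / 2 * (1 - a) := mul_nonneg (by linarith) (by linarith)
    positivity
  have : DifferentiableAt ℝ (fun u => 1 - a * (1 / (1 - u) + ν / 2 * (1 - a))⁻¹) s := by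
    fun_prop (disch := assumption)
  exact this.congr_of_eventuallyEq (h_eventuallyEq hs.ne)

theorem stmt11 (ν : ℝ) (hν : 0 ≤ ν) (α : ℝ) (hα : α ∈ Set.Ioo (0 : ℝ) 1)
    (x₀ : ℕ) (hx₀ : 1 ≤ x₀) (s : ℝ) (hs : s ∈ Set.Ioo (0 : ℝ) 1) :
    Tendsto (fun t : ℝ =>
        ((h ν α s) ^ x₀ - (h ν α (h ν t 0 * s)) ^ x₀) / (1 - (h ν (α * t) 0) ^ x₀))
      (nhdsWithin 0 (Set.Ioi 0))
      (nhds (α⁻¹ * s * deriv (h ν α) s * (h ν α s) ^ (x₀ - 1))) := by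
  obtain ⟨hα0, hα1⟩ := hα
  set c := (1 + ν / 2)⁻¹
  have hc : 0 < c := by positivity
  have hh0 := hasDerivAt_h_param_zero (ν := ν) (by positivity)
  have hd := (differentiableAt_h hν hα1.le hs.2).hasDerivAt
  have hinner : HasDerivAt (fun t => h ν t 0 * s) (-c * s) 0 := hh0.mul_const s
  have hscaled : HasDerivAt (fun t => h ν (α * t) 0) (-c * α) 0 :=
    (hh0.comp_of_eq 0 ((hasDerivAt_id' 0).const_mul α) (mul_zero α).symm).congr_deriv (by ring)
  have hnum : HasDerivAt (fun t => h ν α s ^ x₀ - h ν α (h ν t 0 * s) ^ x₀)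
      (x₀ * h ν α s ^ (x₀ - 1) * deriv (h ν α) s * (c * s)) 0 :=
    (((hd.pow x₀).comp_of_eq 0 hinner (by simp [h_zero_zero])).const_sub _).congr_deriv (by ring)
  have hden : HasDerivAt (fun t => 1 - h ν (α * t) 0 ^ x₀) (x₀ * c * α) 0 :=
    ((hscaled.pow x₀).const_sub 1).congr_deriv (by simp [h_zero_zero]; ring)
  have hx : (x₀ : ℝ) ≠ 0 := by positivity
  have hlim := tendsto_div_of_hasDerivAt_of_eq_zero hnum hden
    (by simp [h_zero_zero]) (by simp [h_zero_zero]) (by positivity)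
  have hquot : x₀ * h ν α s ^ (x₀ - 1) * deriv (h ν α) s * (c * s) / (x₀ * c * α)
      = α⁻¹ * s * deriv (h ν α) s * h ν α s ^ (x₀ - 1) := by
    field_simp
  rw [← hquot]
  exact hlim.mono_left (nhdsWithin_mono 0 fun _ ht => (Set.mem_Ioi.mp ht).ne')
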